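/- Let g : [0,1] → ℝ be concave and monotone nondecreasing on [0,1] with g(0) ≥ 0, and let ĝ : [0,1] → ℝ be monotone nondecreasing on [0,1]. Let α > 0, K ≥ 1, and let x, y satisfy 0 < x, y = (1+α) * x, and y ≤ 1. Suppose g(x) ≤ K * ĝ(x) and ĝ(y) ≤ K * g(y). Then for every q ∈ [x, y]: g(q) ≤ K * (1+α) * ĝ(q) and ĝ(q) ≤ K * (1+α) * g(q). -/

import Mathlib

open Set

/-! Concavity and `g 0 ≥ 0` give `g y ≤ (1 + α) * g x`; monotonicity of `g` and `gHat` then carries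
the bounds at the grid points `x` and `y` to every `q` between them at the cost of that factor. -/

lemma ConcaveOn.smul_le_apply_smul {𝕜 E β : Type*} [Ring 𝕜] [PartialOrder 𝕜] [IsOrderedRing 𝕜]
    [AddCommGroup E] [Module 𝕜 E] [AddCommGroup β] [PartialOrder β] [IsOrderedAddMonoid β]
    [Module 𝕜 β] [PosSMulMono 𝕜 β] {s : Set E} {f : E → β} (hf : ConcaveOn 𝕜 s f)
    (h0 : (0 : E) ∈ s) (hf0 : 0 ≤ f 0) {y : E} (hy : y ∈ s) {t : 𝕜} (ht0 : 0 ≤ t) (ht1 : t ≤ 1) :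
    t • f y ≤ f (t • y) := by
  have hconc := hf.2 hy h0 ht0 (sub_nonneg.2 ht1) (add_sub_cancel t 1)
  rw [smul_zero, add_zero] at hconc
  calc t • f y ≤ t • f y + (1 - t) • f 0 :=
        le_add_of_nonneg_right (smul_nonneg (sub_nonneg.2 ht1) hf0)
    _ ≤ f (t • y) := hconc

lemma ConcaveOn.apply_mul_le_mul_apply {s : Set ℝ} {f : ℝ → ℝ} (hf : ConcaveOn ℝ s f)
    (h0 : (0 : ℝ) ∈ s) (hf0 : 0 ≤ f 0) {c x : ℝ} (hc : 1 ≤ c) (hcx : c * x ∈ s) :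
    f (c * x) ≤ c * f x := by
  have hc0 : 0 < c := zero_lt_one.trans_le hc
  have h := hf.smul_le_apply_smul h0 hf0 hcx (inv_nonneg.2 hc0.le) (inv_le_one_of_one_le₀ hc)
  rwa [smul_eq_mul, smul_eq_mul, inv_mul_cancel_left₀ hc0.ne', inv_mul_le_iff₀ hc0] at h

theorem grid_interpolation_approx
    (g gHat : ℝ → ℝ)
    (hg : ConcaveOn ℝ (Icc (0:ℝ) 1) g)
    (hgmono : MonotoneOn g (Icc (0:ℝ) 1))
    (hg0 : 0 ≤ g 0)
    (hgHatmono : MonotoneOn gHat (Icc (0:ℝ) 1))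
    (α K x y : ℝ) (hα : 0 < α) (hK : 1 ≤ K)
    (hx : 0 < x) (hy : y = (1 + α) * x) (hy1 : y ≤ 1)
    (h1 : g x ≤ K * gHat x) (h2 : gHat y ≤ K * g y) :
    ∀ q ∈ Icc x y, g q ≤ K * (1 + α) * gHat q ∧ gHat q ≤ K * (1 + α) * g q := by
  rintro q ⟨hxq, hqy⟩
  have hα' : 0 < 1 + α := by linarith
  have mem : ∀ p, x ≤ p → p ≤ y → p ∈ Icc (0:ℝ) 1 := fun p hxp hpy =>
    ⟨hx.le.trans hxp, hpy.trans hy1⟩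
  have hxI := mem x le_rfl (hxq.trans hqy)
  have hqI := mem q hxq hqy
  have hyI := mem y (hxq.trans hqy) le_rfl
  have hgy : g y ≤ (1 + α) * g x := by
    subst hy
    exact hg.apply_mul_le_mul_apply ⟨le_rfl, zero_le_one⟩ hg0 (by linarith) hyI
  constructor
  · calc g q ≤ g y := hgmono hqI hyI hqy
      _ ≤ (1 + α) * (K * gHat x) := hgy.trans (mul_le_mul_of_nonneg_left h1 hα'.le)
      _ = K * (1 + α) * gHat x := by ring
      _ ≤ K * (1 + α) * gHat q := by gcongr; exact hgHatmono hxI hqI hxq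
  · calc gHat q ≤ gHat y := hgHatmono hqI hyI hqy
      _ ≤ K * ((1 + α) * g x) := h2.trans (mul_le_mul_of_nonneg_left hgy (by linarith))
      _ = K * (1 + α) * g x := by ring
      _ ≤ K * (1 + α) * g q := by gcongr; exact hgmono hxI hqI hxq
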